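/- Let n ≥ 1, let L₂, …, Lₙ be Kripke complete monomodal logics, and let L = T × L₂ × … × Lₙ. Fix an n-modal formula φ whose variables are among p₁, …, p_m and let A and σ be the formula and translation defined from φ. If A → σ(φ) ∉ L, then φ ∉ L. (Direction (⇒) of Lemma 3.1, in contrapositive form) -/

import Mathlib

namespace ModalProducts

/-- `N`-modal formulas over propositional variables indexed by `ℕ`
(the variable `pₖ` is `var k`; the extra variable `p` is `var 0`). -/
inductive MF (N : ℕ) : Type
  | var : ℕ → MF N
  | bot : MF N
  | and : MF N → MF N → MF N
  | or  : MF N → MF N → MF N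
  | imp : MF N → MF N → MF N
  | box : Fin N → MF N → MF N
deriving DecidableEq

namespace MF

variable {N : ℕ}

/-- negation: `¬ψ = ψ → ⊥`. -/
def neg (φ : MF N) : MF N := imp φ bot

/-- diamond: `◇ᵢψ = ¬□ᵢ¬ψ`. -/
def dia (i : Fin N) (φ : MF N) : MF N := neg (box i (neg φ))

/-- modal depth. -/
def md : MF N → ℕ
  | var _ => 0
  | bot => 0
  | and φ ψ => max (md φ) (md ψ)
  | or φ ψ => max (md φ) (md ψ)
  | imp φ ψ => max (md φ) (md ψ)
  | box _ φ => md φ + 1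

/-- length (number of symbols; the variable `pₖ` counts as `k+1` symbols,
accounting for the subscript). -/
def len : MF N → ℕ
  | var q => q + 1
  | bot => 1
  | and φ ψ => len φ + len ψ + 1
  | or φ ψ => len φ + len ψ + 1
  | imp φ ψ => len φ + len ψ + 1
  | box _ φ => len φ + 1

/-- the set of propositional variables occurring in a formula. -/
def vars : MF N → Set ℕ
  | var q => {q}
  | bot => ∅
  | and φ ψ => vars φ ∪ vars ψ
  | or φ ψ => vars φ ∪ vars ψ
  | imp φ ψ => vars φ ∪ vars ψ
  | box _ φ => vars φ

/-- the largest index of a variable occurring in a formula (0 if none). -/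
def maxVar : MF N → ℕ
  | var q => q
  | bot => 0
  | and φ ψ => max (maxVar φ) (maxVar ψ)
  | or φ ψ => max (maxVar φ) (maxVar ψ)
  | imp φ ψ => max (maxVar φ) (maxVar ψ)
  | box _ φ => maxVar φ

/-- the list of subformulas of a formula. -/
def subfs : MF N → List (MF N)
  | var q => [var q]
  | bot => [bot]
  | and φ ψ => and φ ψ :: (subfs φ ++ subfs ψ)
  | or φ ψ => or φ ψ :: (subfs φ ++ subfs ψ)
  | imp φ ψ => imp φ ψ :: (subfs φ ++ subfs ψ)
  | box i φ => box i φ :: subfs φ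

/-- uniform substitution of formulas for variables. -/
def subst (s : ℕ → MF N) : MF N → MF N
  | var q => s q
  | bot => bot
  | and φ ψ => and (subst s φ) (subst s ψ)
  | or φ ψ => or (subst s φ) (subst s ψ)
  | imp φ ψ => imp (subst s φ) (subst s ψ)
  | box i φ => box i (subst s φ)

end MF

/-- `θ` is a subformula of `φ`. -/
def Subformula {N : ℕ} (θ φ : MF N) : Prop := θ ∈ φ.subfs

/-- A Kripke `N`-frame: a nonempty set of points with `N` accessibility relations. -/
structure Frame (N : ℕ) where
  W : Type
  nonempty : Nonempty W
  R : Fin N → W → W → Prop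

/-- Truth of a formula at a point of a frame under a valuation. -/
def Sat {N : ℕ} (F : Frame N) (v : ℕ → Set F.W) : F.W → MF N → Prop
  | x, .var q => x ∈ v q
  | _, .bot => False
  | x, .and φ ψ => Sat F v x φ ∧ Sat F v x ψ
  | x, .or φ ψ => Sat F v x φ ∨ Sat F v x ψ
  | x, .imp φ ψ => Sat F v x φ → Sat F v x ψ
  | x, .box i φ => ∀ y, F.R i x y → Sat F v y φ

/-- Validity of a formula in a frame: truth at every point under every valuation. -/
def Valid {N : ℕ} (F : Frame N) (φ : MF N) : Prop := ∀ (v : ℕ → Set F.W) (x : F.W), Sat F v x φ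

/-- A set of formulas is valid in a frame if all of its members are. -/
def ValidSet {N : ℕ} (F : Frame N) (L : Set (MF N)) : Prop := ∀ φ ∈ L, Valid F φ

/-- The logic of a class of frames. -/
def Logic {N : ℕ} (C : Set (Frame N)) : Set (MF N) := {φ | ∀ F ∈ C, Valid F φ}

/-- A logic is Kripke complete if it is the logic of some nonempty class of frames. -/
def KripkeComplete {N : ℕ} (L : Set (MF N)) : Prop :=
  ∃ C : Set (Frame N), C.Nonempty ∧ L = Logic C

/-- The product of `N` 1-frames. -/
def prodFrame {N : ℕ} (Fs : Fin N → Frame 1) : Frame N where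
  W := ∀ i, (Fs i).W
  nonempty := ⟨fun i => (Fs i).nonempty.some⟩
  R := fun i x y => (Fs i).R 0 (x i) (y i) ∧ ∀ k, k ≠ i → x k = y k

/-- The product of `N` Kripke complete monomodal logics: the logic of the class of
products of frames of the factors. -/
def productLogic {N : ℕ} (Ls : Fin N → Set (MF 1)) : Set (MF N) :=
  Logic {F | ∃ Fs : Fin N → Frame 1, (∀ i, ValidSet (Fs i) (Ls i)) ∧ F = prodFrame Fs}

/-- A 1-frame is reflexive. -/
def ReflexiveFrame (F : Frame 1) : Prop := ∀ x, F.R 0 x x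

/-- The logic `T` of all reflexive 1-frames. -/
def logicT : Set (MF 1) := Logic {F | ReflexiveFrame F}

/-- The logic `K` of all 1-frames. -/
def logicK : Set (MF 1) := Logic Set.univ

/-- The logic `S5` of all 1-frames whose relation is an equivalence. -/
def logicS5 : Set (MF 1) := Logic {F | Equivalence (F.R 0)}

section Translation

variable {n : ℕ}

/-- the variable `p`. -/
def pv : MF (n+1) := .var 0

/-- `◆₁ψ = ◇₁(¬p ∧ ◇₁(p ∧ ψ))`. -/
def blackDia (ψ : MF (n+1)) : MF (n+1) :=
  MF.dia 0 (.and (MF.neg pv) (MF.dia 0 (.and pv ψ)))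

/-- `α_k = ◆₁ᵏ □₁ p`. -/
def alphaF (k : ℕ) : MF (n+1) := blackDia^[k] (.box 0 pv)

/-- `β_k = ¬p ∧ ◇₁(p ∧ α_k)`. -/
def betaF (k : ℕ) : MF (n+1) := .and (MF.neg pv) (MF.dia 0 (.and pv (alphaF k)))

/-- `B = β_{m+1}`. -/
def Bf (m : ℕ) : MF (n+1) := betaF (m+1)

/-- The translation `σ`: `σ(p_k) = β_k`, `σ(⊥) = ⊥`, `σ` commutes with `∧, ∨, →`,
and `σ(□ᵢψ) = □ᵢ(B → σ(ψ))`. -/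
def sigmaT (m : ℕ) : MF (n+1) → MF (n+1)
  | .var k => betaF k
  | .bot => .bot
  | .and φ ψ => .and (sigmaT m φ) (sigmaT m ψ)
  | .or φ ψ => .or (sigmaT m φ) (sigmaT m ψ)
  | .imp φ ψ => .imp (sigmaT m φ) (sigmaT m ψ)
  | .box i φ => .box i (.imp (Bf m) (sigmaT m φ))

/-- conjunction of a head formula with a list of formulas. -/
def bigAnd (ψ : MF (n+1)) (l : List (MF (n+1))) : MF (n+1) := l.foldl .and ψ

/-- `□^{≤k}`: `□^{≤0}ψ = ψ`, `□^{≤k+1}ψ = □^{≤k}ψ ∧ □₁□^{≤k}ψ ∧ … ∧ □ₙ□^{≤k}ψ`. -/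
def boxLe : ℕ → MF (n+1) → MF (n+1)
  | 0, ψ => ψ
  | k+1, ψ => bigAnd (boxLe k ψ) (List.ofFn fun i : Fin (n+1) => .box i (boxLe k ψ))

/-- `□₋₁^{≤k}`: like `□^{≤k}` but using only `□₂, …, □ₙ`. -/
def boxLeTail : ℕ → MF (n+1) → MF (n+1)
  | 0, ψ => ψ
  | k+1, ψ => bigAnd (boxLeTail k ψ) (List.ofFn fun i : Fin n => .box i.succ (boxLeTail k ψ))

/-- `◇₋₁^{≤k}ψ = ¬□₋₁^{≤k}¬ψ`. -/
def diaLeTail (k : ℕ) (ψ : MF (n+1)) : MF (n+1) := MF.neg (boxLeTail k (MF.neg ψ))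

/-- `A = B ∧ □^{≤md φ}(B → □₋₁^{≤md φ}B) ∧ □^{≤md φ}(◇₋₁^{≤md φ}B → B)`. -/
def Af (m : ℕ) (φ : MF (n+1)) : MF (n+1) :=
  .and (Bf m)
    (.and (boxLe φ.md (.imp (Bf m) (boxLeTail φ.md (Bf m))))
          (boxLe φ.md (.imp (diaLeTail φ.md (Bf m)) (Bf m))))

end Translation

/-!
Let `A` hold at `x` in a product `F = F₁ × ⋯ × Fₙ` with `F₁` reflexive, and let `T` be the set
of points where `B` holds. Substituting the truth sets of the `β_k` for the variables turns
`σ(φ)` into the relativization of `φ` to `T`, and the last two conjuncts of `A` say that, within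
`d = md φ` steps of `x`, membership in `T` does not change along `R₂, …, Rₙ`. Replace the first
factor by `T` itself, related by the restriction of `R̄₁`: this is again a product of the right
kind. The map `(a, w₂, …, wₙ) ↦ (a₁, w₂, …, wₙ)` to `F` is, up to depth `d` around
`(x, x₂, …, xₙ) ↦ x`, a bisimulation onto `T`, so validity of `φ` in the new product yields
the relativization of `φ` at `x`.
-/

namespace MF

variable {N : ℕ}

def relativize (t : ℕ) : MF N → MF N
  | var q => var q
  | bot => bot
  | and φ ψ => and (relativize t φ) (relativize t ψ)
  | or φ ψ => or (relativize t φ) (relativize t ψ)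
  | imp φ ψ => imp (relativize t φ) (relativize t ψ)
  | box i φ => box i (imp (var t) (relativize t φ))

end MF

theorem sigmaT_eq_subst_relativize {n : ℕ} (m : ℕ) (φ : MF (n+1)) :
    sigmaT m φ = (φ.relativize (m+1)).subst betaF := by
  induction φ <;> simp_all [MF.relativize, sigmaT, MF.subst, Bf]

theorem sat_subst {N : ℕ} (F : Frame N) (v : ℕ → Set F.W) (s : ℕ → MF N) (φ : MF N)
    (x : F.W) : Sat F v x (φ.subst s) ↔ Sat F (fun q => {y | Sat F v y (s q)}) x φ := by
  induction φ generalizing x <;> simp [MF.subst, Sat, *]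

theorem sat_iff_sat_relativize {N : ℕ} {G F : Frame N} (g : G.W → F.W) (u : ℕ → Set F.W)
    (t d : ℕ) (near : ℕ → G.W → Prop)
    (forth : ∀ c < d, ∀ i z z', near c z → G.R i z z' →
      F.R i (g z) (g z') ∧ g z' ∈ u t ∧ near (c+1) z')
    (back : ∀ c < d, ∀ i z w, near c z → F.R i (g z) w → w ∈ u t →
      ∃ z', G.R i z z' ∧ g z' = w ∧ near (c+1) z')
    (ψ : MF N) (c : ℕ) (z : G.W) (hc : ψ.md + c ≤ d) (hz : near c z) :
    Sat G (fun q => g ⁻¹' u q) z ψ ↔ Sat F u (g z) (ψ.relativize t) := by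
  induction ψ generalizing c z with
  | var q => exact Iff.rfl
  | bot => exact Iff.rfl
  | and ψ χ ihψ ihχ =>
    simp only [MF.md] at hc
    exact and_congr (ihψ c z (by omega) hz) (ihχ c z (by omega) hz)
  | or ψ χ ihψ ihχ =>
    simp only [MF.md] at hc
    exact or_congr (ihψ c z (by omega) hz) (ihχ c z (by omega) hz)
  | imp ψ χ ihψ ihχ =>
    simp only [MF.md] at hc
    exact imp_congr (ihψ c z (by omega) hz) (ihχ c z (by omega) hz)
  | box i ψ ih =>
    simp only [MF.md] at hc
    constructor
    · intro h w hw hwt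
      obtain ⟨z', hzz', rfl, hz'⟩ := back c (by omega) i z w hz hw hwt
      exact (ih (c+1) z' (by omega) hz').1 (h z' hzz')
    · intro h z' hzz'
      obtain ⟨hR, ht, hz'⟩ := forth c (by omega) i z z' hz hzz'
      exact (ih (c+1) z' (by omega) hz').2 (h _ hR ht)

section Reach

variable {N M : ℕ} {F : Frame N} {ι : Fin M → Fin N} {k : ℕ} {x y : F.W}

def reachVia (F : Frame N) (ι : Fin M → Fin N) : ℕ → F.W → F.W → Prop
  | 0, x, y => x = y
  | k+1, x, y => reachVia F ι k x y ∨ ∃ j z, F.R (ι j) x z ∧ reachVia F ι k z y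

theorem reachVia.succ (h : reachVia F ι k x y) : reachVia F ι (k+1) x y := Or.inl h

theorem reachVia.mono {k' : ℕ} (hk : k ≤ k') (h : reachVia F ι k x y) : reachVia F ι k' x y := by
  induction hk with
  | refl => exact h
  | step _ ih => exact ih.succ

theorem reachVia.snoc {z : F.W} {j : Fin M} (h : reachVia F ι k x y) (hyz : F.R (ι j) y z) :
    reachVia F ι (k+1) x z := by
  induction k generalizing x with
  | zero => cases h; exact Or.inr ⟨j, z, hyz, rfl⟩
  | succ k ih =>
    rcases h with h | ⟨j', w, hxw, hwy⟩
    · exact (ih h).succ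
    · exact Or.inr ⟨j', w, hxw, ih hwy⟩

end Reach

section BoxWithin

variable {n M : ℕ}

def boxWithin (ι : Fin M → Fin (n+1)) : ℕ → MF (n+1) → MF (n+1)
  | 0, ψ => ψ
  | k+1, ψ => bigAnd (boxWithin ι k ψ) (List.ofFn fun j => .box (ι j) (boxWithin ι k ψ))

theorem boxLe_eq_boxWithin (k : ℕ) (ψ : MF (n+1)) : boxLe k ψ = boxWithin id k ψ := by
  induction k <;> simp [boxLe, boxWithin, *]

theorem boxLeTail_eq_boxWithin (k : ℕ) (ψ : MF (n+1)) :
    boxLeTail k ψ = boxWithin Fin.succ k ψ := by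
  induction k <;> simp [boxLeTail, boxWithin, *]

theorem sat_bigAnd (F : Frame (n+1)) (v : ℕ → Set F.W) (x : F.W) (ψ : MF (n+1))
    (l : List (MF (n+1))) : Sat F v x (bigAnd ψ l) ↔ Sat F v x ψ ∧ ∀ χ ∈ l, Sat F v x χ := by
  induction l generalizing ψ with
  | nil => simp [bigAnd]
  | cons χ l ih =>
    rw [bigAnd, List.foldl_cons, ← bigAnd, ih]
    simp only [Sat, List.forall_mem_cons, and_assoc]

theorem sat_boxWithin (F : Frame (n+1)) (v : ℕ → Set F.W) (ι : Fin M → Fin (n+1)) (k : ℕ)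
    (ψ : MF (n+1)) (x : F.W) :
    Sat F v x (boxWithin ι k ψ) ↔ ∀ y, reachVia F ι k x y → Sat F v y ψ := by
  induction k generalizing x with
  | zero => exact ⟨fun h y hy => hy ▸ h, fun h => h x rfl⟩
  | succ k ih =>
    simp only [boxWithin, sat_bigAnd, List.forall_mem_ofFn_iff, Sat, ih, reachVia]
    grind

end BoxWithin

section Saturation

variable {n : ℕ}

def TailSaturated (F : Frame (n+1)) (T : Set F.W) (x : F.W) (d : ℕ) : Prop :=
  ∀ y w, reachVia F id d x y → reachVia F Fin.succ d y w → (y ∈ T ↔ w ∈ T)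

theorem tailSaturated_of_sat_Af {F : Frame (n+1)} {v : ℕ → Set F.W} {x : F.W} {m : ℕ}
    {φ : MF (n+1)} (h : Sat F v x (Af m φ)) :
    x ∈ {y | Sat F v y (Bf m)} ∧ TailSaturated F {y | Sat F v y (Bf m)} x φ.md := by
  obtain ⟨hx, hclosed, hsat⟩ := h
  simp only [diaLeTail, MF.neg, boxLe_eq_boxWithin, boxLeTail_eq_boxWithin, sat_boxWithin,
    Sat] at hclosed hsat
  exact ⟨hx, fun y w hy hw =>
    ⟨fun hyB => hclosed y hy hyB w hw, fun hwB => hsat y hy fun hbox => hbox w hw hwB⟩⟩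

end Saturation

section Product

variable {N M : ℕ} {Fs : Fin N → Frame 1}

theorem prodFrame_R_update (x : ∀ i, (Fs i).W) (i : Fin N) (b : (Fs i).W) :
    (prodFrame Fs).R i x (Function.update x i b) ↔ (Fs i).R 0 (x i) b := by
  refine (and_iff_left fun k hk => (Function.update_of_ne hk _ _).symm).trans ?_
  rw [Function.update_self]

theorem eq_update_of_prodFrame_R {i : Fin N} {x y : ∀ i, (Fs i).W}
    (h : (prodFrame Fs).R i x y) : y = Function.update x i (y i) := by
  funext k
  by_cases hk : k = i
  · subst hk; simp
  · rw [Function.update_of_ne hk]; exact (h.2 k hk).symm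

theorem reachVia_update {ι : Fin M → Fin N} {i : Fin N} (hι : ∀ j, ι j ≠ i) {k : ℕ}
    {x y : ∀ i, (Fs i).W} (h : reachVia (prodFrame Fs) ι k x y) (b : (Fs i).W) :
    reachVia (prodFrame Fs) ι k (Function.update x i b) (Function.update y i b) := by
  induction k generalizing x with
  | zero => cases h; rfl
  | succ k ih =>
    rcases h with h | ⟨j, z, hxz, hzy⟩
    · exact (ih h).succ
    have hz : Function.update (z : ∀ i, (Fs i).W) i b =
        Function.update (Function.update x i b) (ι j) (z (ι j)) := by
      rw [eq_update_of_prodFrame_R hxz, Function.update_comm (hι j).symm, Function.update_self]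
    refine Or.inr ⟨j, Function.update z i b, ?_, ih hzy⟩
    rw [hz, prodFrame_R_update, Function.update_of_ne (hι j)]
    exact hxz.1

end Product

section Restriction

variable {n : ℕ} (Fs : Fin (n+1) → Frame 1) (T : Set (prodFrame Fs).W) (hT : T.Nonempty)

def headFrame : Frame 1 where
  W := T
  nonempty := hT.to_subtype
  R _ a b := (prodFrame Fs).R 0 a b

def restrictFactors : Fin (n+1) → Frame 1 :=
  Fin.cases (headFrame Fs T hT) fun j => Fs j.succ

/-- A point `(a, w₂, …, wₙ)` of the new product is sent to `(a₁, w₂, …, wₙ)`. -/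
def restrictProj (z : ∀ i, (restrictFactors Fs T hT i).W) : ∀ i, (Fs i).W :=
  Fin.cases ((z 0).val 0) fun j => z j.succ

def IsNear (x : ∀ i, (Fs i).W) (c : ℕ) (z : ∀ i, (restrictFactors Fs T hT i).W) : Prop :=
  reachVia (prodFrame Fs) id c x (z 0).val ∧
    reachVia (prodFrame Fs) Fin.succ c (z 0).val (restrictProj Fs T hT z)

variable {Fs T hT}

theorem headFrame_reflexive (h : ReflexiveFrame (Fs 0)) : ReflexiveFrame (headFrame Fs T hT) :=
  fun _ => ⟨h _, fun _ _ => rfl⟩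

@[simp]
theorem restrictProj_zero (z : ∀ i, (restrictFactors Fs T hT i).W) :
    restrictProj Fs T hT z 0 = (z 0).val 0 := rfl

@[simp]
theorem restrictProj_succ (z : ∀ i, (restrictFactors Fs T hT i).W) (j : Fin n) :
    restrictProj Fs T hT z j.succ = z j.succ := rfl

theorem restrictProj_update_zero (z : ∀ i, (restrictFactors Fs T hT i).W)
    (a : (restrictFactors Fs T hT 0).W) :
    restrictProj Fs T hT (Function.update z 0 a) =
      Function.update (restrictProj Fs T hT z) 0 (a.val 0) := by
  funext k
  cases k using Fin.cases with
  | zero => simp only [restrictProj_zero, Function.update_self]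
  | succ j =>
    exact (Function.update_of_ne (Fin.succ_ne_zero j) a z).trans
      (Function.update_of_ne (Fin.succ_ne_zero j) (a.val 0) (restrictProj Fs T hT z)).symm

theorem restrictProj_update_succ (z : ∀ i, (restrictFactors Fs T hT i).W) (j : Fin n)
    (b : (Fs j.succ).W) :
    restrictProj Fs T hT (Function.update z j.succ b) =
      Function.update (restrictProj Fs T hT z) j.succ b := by
  funext k
  cases k using Fin.cases with
  | zero =>
    have h0 : (0 : Fin (n+1)) ≠ j.succ := (Fin.succ_ne_zero j).symm
    exact (congrArg (fun p => p.val 0) (Function.update_of_ne h0 b z)).trans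
      (Function.update_of_ne h0 b (restrictProj Fs T hT z)).symm
  | succ l =>
    by_cases hl : l = j
    · subst hl
      exact (Function.update_self l.succ b z).trans
        (Function.update_self l.succ b (restrictProj Fs T hT z)).symm
    · have hl' : l.succ ≠ j.succ := (Fin.succ_injective _).ne hl
      exact (Function.update_of_ne hl' b z).trans
        (Function.update_of_ne hl' b (restrictProj Fs T hT z)).symm

theorem restrictProj_R {i : Fin (n+1)} {z z' : ∀ i, (restrictFactors Fs T hT i).W}
    (h : (prodFrame (restrictFactors Fs T hT)).R i z z') :
    (prodFrame Fs).R i (restrictProj Fs T hT z) (restrictProj Fs T hT z') := by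
  cases i using Fin.cases with
  | zero =>
    refine ⟨h.1.1, fun k hk => ?_⟩
    cases k using Fin.cases with
    | zero => exact absurd rfl hk
    | succ l => exact h.2 l.succ hk
  | succ j =>
    refine ⟨h.1, fun k hk => ?_⟩
    cases k using Fin.cases with
    | zero => exact congrArg (fun a => a.val 0) (h.2 0 hk)
    | succ l => exact h.2 l.succ hk

theorem IsNear.of_R {x : ∀ i, (Fs i).W} {c : ℕ} {i : Fin (n+1)}
    {z z' : ∀ i, (restrictFactors Fs T hT i).W} (hz : IsNear Fs T hT x c z)
    (h : (prodFrame (restrictFactors Fs T hT)).R i z z') : IsNear Fs T hT x (c+1) z' := by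
  cases i using Fin.cases with
  | zero =>
    have hhead : (prodFrame Fs).R 0 (z 0).val (z' 0).val := h.1
    refine ⟨hz.1.snoc (j := 0) hhead, reachVia.succ ?_⟩
    rw [eq_update_of_prodFrame_R h, restrictProj_update_zero, Function.update_self,
      eq_update_of_prodFrame_R hhead]
    exact reachVia_update Fin.succ_ne_zero hz.2 _
  | succ j =>
    have hhead : z' 0 = z 0 := (h.2 0 (Fin.succ_ne_zero j).symm).symm
    refine ⟨hhead ▸ hz.1.succ, ?_⟩
    rw [hhead]
    exact hz.2.snoc (restrictProj_R h)

theorem IsNear.restrictProj_mem {x : ∀ i, (Fs i).W} {c d : ℕ}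
    (hsat : TailSaturated (prodFrame Fs) T x d) (hcd : c ≤ d)
    {z : ∀ i, (restrictFactors Fs T hT i).W} (hz : IsNear Fs T hT x c z) :
    restrictProj Fs T hT z ∈ T :=
  (hsat _ _ (hz.1.mono hcd) (hz.2.mono hcd)).1 (z 0).property

theorem IsNear.exists_R_restrictProj_eq {x : ∀ i, (Fs i).W} {c d : ℕ}
    (hsat : TailSaturated (prodFrame Fs) T x d) (hcd : c < d) {i : Fin (n+1)}
    {z : ∀ i, (restrictFactors Fs T hT i).W} (hz : IsNear Fs T hT x c z) {w : ∀ i, (Fs i).W}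
    (hw : (prodFrame Fs).R i (restrictProj Fs T hT z) w) (hwT : w ∈ T) :
    ∃ z', (prodFrame (restrictFactors Fs T hT)).R i z z' ∧ restrictProj Fs T hT z' = w := by
  have hw_eq := eq_update_of_prodFrame_R hw
  cases i using Fin.cases with
  | zero =>
    -- `a'` lies in `T` because `w ∈ T` is reached from it along `R₂, …, Rₙ`
    set a' := Function.update (z 0).val 0 (w 0)
    have hstep : (prodFrame Fs).R 0 (z 0).val a' := (prodFrame_R_update _ _ _).2 hw.1
    have htail : reachVia (prodFrame Fs) Fin.succ c a' w := by
      rw [hw_eq]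
      exact reachVia_update Fin.succ_ne_zero hz.2 _
    have ha' : a' ∈ T :=
      (hsat _ _ ((hz.1.snoc (j := 0) hstep).mono hcd) (htail.mono hcd.le)).2 hwT
    refine ⟨Function.update z 0 ⟨a', ha'⟩, (prodFrame_R_update _ _ _).2 hstep, ?_⟩
    calc restrictProj Fs T hT (Function.update z 0 ⟨a', ha'⟩)
        = Function.update (restrictProj Fs T hT z) 0 (a' 0) := restrictProj_update_zero z _
      _ = w := hw_eq.symm
  | succ j =>
    refine ⟨Function.update z j.succ (w j.succ), (prodFrame_R_update _ _ _).2 hw.1, ?_⟩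
    rw [restrictProj_update_succ, ← hw_eq]

end Restriction

theorem validSet_logicT_iff {F : Frame 1} : ValidSet F logicT ↔ ReflexiveFrame F := by
  refine ⟨fun h x => ?_, fun h _ hχ => hχ F h⟩
  have hT : MF.imp (.box 0 (.var 0)) (.var 0) ∈ logicT := fun G hG _ y hb => hb y (hG y)
  exact h _ hT (fun _ => {y | F.R 0 x y}) x fun _ hy => hy

theorem sat_relativize_of_valid_restrict {n : ℕ} (Fs : Fin (n+1) → Frame 1)
    (u : ℕ → Set (prodFrame Fs).W) (t : ℕ) {x : ∀ i, (Fs i).W} (hx : x ∈ u t) {ψ : MF (n+1)}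
    (hsat : TailSaturated (prodFrame Fs) (u t) x ψ.md)
    (hψ : Valid (prodFrame (restrictFactors Fs (u t) ⟨x, hx⟩)) ψ) :
    Sat (prodFrame Fs) u x (ψ.relativize t) := by
  let xhat : ∀ i, (restrictFactors Fs (u t) ⟨x, hx⟩ i).W := Fin.cases ⟨x, hx⟩ fun j => x j.succ
  have hproj : restrictProj Fs (u t) ⟨x, hx⟩ xhat = x := by
    funext k
    cases k using Fin.cases <;> rfl
  have hnear : IsNear Fs (u t) ⟨x, hx⟩ x 0 xhat := ⟨rfl, hproj.symm⟩
  rw [← hproj]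
  refine (sat_iff_sat_relativize (G := prodFrame (restrictFactors Fs (u t) ⟨x, hx⟩))
    (F := prodFrame Fs) (restrictProj Fs (u t) ⟨x, hx⟩) u t ψ.md (IsNear Fs (u t) ⟨x, hx⟩ x)
    ?_ ?_ ψ 0 xhat (by simp) hnear).1 (hψ _ xhat)
  · intro c hc i z z' hz h
    have hz' := hz.of_R h
    exact ⟨restrictProj_R h, hz'.restrictProj_mem hsat hc, hz'⟩
  · intro c hc i z w hz hw hwT
    obtain ⟨z', h, rfl⟩ := hz.exists_R_restrictProj_eq hsat hc hw hwT
    exact ⟨z', h, rfl, hz.of_R h⟩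

end ModalProducts

open ModalProducts

theorem products_with_T_lemma_3_1_right_general (n m : ℕ) (Ls : Fin n → Set (MF 1))
    (L : Set (MF (n+1)))
    (hL : L = productLogic (Fin.cases (motive := fun _ => Set (MF 1)) logicT Ls))
    (φ : MF (n+1))
    (h : MF.imp (Af m φ) (sigmaT m φ) ∉ L) :
    φ ∉ L := by
  subst hL
  refine fun hφ => h ?_
  rintro _ ⟨Fs, hFs, rfl⟩ v x hA
  obtain ⟨hx, hsat⟩ := tailSaturated_of_sat_Af hA
  rw [sigmaT_eq_subst_relativize, sat_subst]
  refine sat_relativize_of_valid_restrict Fs _ (m+1) hx hsat (hφ _ ⟨_, fun i => ?_, rfl⟩)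
  cases i using Fin.cases with
  | zero =>
    exact validSet_logicT_iff.2 <|
      headFrame_reflexive (hT := ⟨x, hx⟩) (validSet_logicT_iff.1 (hFs 0))
  | succ j => exact hFs j.succ

/-- **Lemma 3.1, direction (⇒), contrapositive.** Let `n ≥ 1`, let `L₂, …, Lₙ` be
Kripke complete monomodal logics and `L = T × L₂ × … × Lₙ`.  For an `(n+1)`-modal
formula `φ` whose variables are among `p₁, …, p_m`, with `A` and `σ` defined from `φ`:
if `A → σ(φ) ∉ L` then `φ ∉ L`. -/
theorem products_with_T_lemma_3_1_right (n m : ℕ) (Ls : Fin n → Set (MF 1))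
    (hLs : ∀ i, KripkeComplete (Ls i))
    (L : Set (MF (n+1)))
    (hL : L = productLogic (Fin.cases (motive := fun _ => Set (MF 1)) logicT Ls))
    (φ : MF (n+1)) (hvars : ∀ q ∈ φ.vars, 1 ≤ q ∧ q ≤ m)
    (h : MF.imp (Af m φ) (sigmaT m φ) ∉ L) :
    φ ∉ L :=
  products_with_T_lemma_3_1_right_general n m Ls L hL φ h
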